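/- Let σ = [v₀,…,v_{n−1}] and σ' = [v'₀,…,v'_{n−1}] be two adjacent flag simplices of the standard subdivision lying in a common (n−1)-plane, with v_i = v'_i for all i ≠ k for some 0 < k < n−1, arising from flags (Q₀,…,Q_{n−1}) and (Q'₀,…,Q'_{n−1}) where Q_k and Q'_k share the face Q_{k−1} and are both contained in Q_{k+1}. Then v'_k − v_{n−1} = −(v_k − v_{n−1}) + (v_{k−1} − v_{n−1}) + (v_{k+1} − v_{n−1}), and consequently (v'₀ − v_{n−1}) ∧ ⋯ ∧ (v'_{n−2} − v_{n−1}) = −(v₀ − v_{n−1}) ∧ ⋯ ∧ (v_{n−2} − v_{n−1}). -/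

import Mathlib

/-!
Equal barycenters `c_{Q_j} = c_{Q'_j}` mean that the two flags free the same set of
coordinates in their first `j` steps and fix the remaining ones to the same values. Agreement
at `j = 0`, `k - 1` and `k + 1` but not at `k` forces the second flag to free the two coordinates
of steps `k - 1` and `k` of the first one in the opposite order, which gives
`c_{Q'_k} = c_{Q_{k-1}} + c_{Q_{k+1}} - c_{Q_k}` coordinatewise. The edge vector
`v'_k - v_{n-1}` is therefore `-(v_k - v_{n-1})` plus a combination of the other edge vectors,
which flips the sign of the wedge product.
-/

/-- Barycenter of the `k`-dimensional face `Q_k` of the flag of faces of the cube `[0,1]^m`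
(a congruent model of an `(n−1)`-cube lying in an `(n−1)`-plane, `m = n − 1`) encoded by
`(π, ε)`: `π` records the order in which coordinates become free, `ε i ∈ {0,1}` the value of
coordinate `i` while fixed.  A barycenter determines its face, so two flags agreeing at all
indices `j ≠ k` share all faces `Q_j`, `j ≠ k`; in particular `Q_k` and `Q'_k` share the
face `Q_{k−1}` and are both contained in `Q_{k+1}`. -/
noncomputable def flagBarycenter {m : ℕ} (π : Equiv.Perm (Fin m)) (ε : Fin m → Bool)
    (k : Fin (m + 1)) : Fin m → ℝ :=
  fun i => if ((π.symm i : ℕ) < (k : ℕ)) then 1 / 2 else (if ε i then 1 else 0)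

open Function

namespace AlternatingMap

variable {R M N ι : Type*} [DecidableEq ι]

theorem map_update_eq_zero_of_mem_span [Semiring R] [AddCommMonoid M] [Module R M]
    [AddCommMonoid N] [Module R N] (f : M [⋀^ι]→ₗ[R] N) (v : ι → M) (p : ι) {x : M}
    (hx : x ∈ Submodule.span R (v '' {p}ᶜ)) : f (update v p x) = 0 := by
  induction hx using Submodule.span_induction with
  | mem _ hy =>
    obtain ⟨q, hq, rfl⟩ := hy
    exact f.map_update_self v (Ne.symm hq)
  | zero => exact f.map_update_zero v p
  | add _ _ _ _ hy hz => rw [f.map_update_add, hy, hz, add_zero]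
  | smul _ _ _ hy => rw [f.map_update_smul, hy, smul_zero]

theorem map_eq_neg_of_update_neg_add [Ring R] [AddCommGroup M] [Module R M]
    [AddCommGroup N] [Module R N] (f : M [⋀^ι]→ₗ[R] N) {v w : ι → M} (p : ι) {x : M}
    (hx : x ∈ Submodule.span R (v '' {p}ᶜ)) (hw : ∀ i ≠ p, w i = v i)
    (hwp : w p = -v p + x) :
    f w = -f v := by
  have hupd : w = update v p (-v p + x) := by
    ext i
    rcases eq_or_ne i p with rfl | hi
    · rw [update_self, hwp]
    · rw [update_of_ne hi, hw i hi]
  rw [hupd, f.map_update_add, f.map_update_neg, update_eq_self,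
    f.map_update_eq_zero_of_mem_span v p hx, add_zero]

end AlternatingMap

/- The sublevel sets of `f` and `g` agree below `k - 1` and `k + 1` but not below `k`,
so `g` exchanges the values `k - 1` and `k` of `f`. -/
theorem lt_iff_lt_pred_or_eq_of_injective {ι : Type*} {f g : ι → ℕ} (hf : Injective f)
    (hg : Injective g) {k : ℕ} (hpred : ∀ i, f i < k - 1 ↔ g i < k - 1)
    (hsucc : ∀ i, f i < k + 1 ↔ g i < k + 1) (hk : ∃ i, ¬(f i < k ↔ g i < k)) (i : ι) :
    g i < k ↔ f i < k - 1 ∨ f i = k := by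
  obtain ⟨i₀, hi₀⟩ := hk
  have := hpred i; have := hsucc i; have := hpred i₀; have := hsucc i₀
  rcases eq_or_ne i i₀ with rfl | hne
  · omega
  · have := hf.ne hne; have := hg.ne hne
    omega

theorem sub_last_mem_span_image_compl {R M : Type*} [Ring R] [AddCommGroup M] [Module R M]
    {m : ℕ} (v : Fin (m + 1) → M) {p : Fin m} {j : Fin (m + 1)} (hj : (j : ℕ) ≠ p) :
    v j - v (Fin.last m) ∈
      Submodule.span R ((fun i : Fin m => v i.castSucc - v (Fin.last m)) '' {p}ᶜ) := by
  induction j using Fin.lastCases with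
  | last => rw [sub_self]; exact zero_mem _
  | cast i => exact Submodule.subset_span ⟨i, by simpa [Fin.ext_iff] using hj, rfl⟩

theorem flagBarycenter_eq_iff {m : ℕ} {π π' : Equiv.Perm (Fin m)} {ε ε' : Fin m → Bool}
    {j : Fin (m + 1)} :
    flagBarycenter π ε j = flagBarycenter π' ε' j ↔
      ∀ i, ((π.symm i : ℕ) < j ↔ (π'.symm i : ℕ) < j) ∧
        ((j : ℕ) ≤ π.symm i → ε i = ε' i) := by
  simp only [funext_iff, flagBarycenter]
  refine forall_congr' fun i => ?_
  by_cases h : (π.symm i : ℕ) < j <;> by_cases h' : (π'.symm i : ℕ) < j <;>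
    cases ε i <;> cases ε' i <;> simp [h, h']

theorem flagBarycenter_eq_pred_add_succ_sub {m k : ℕ} (hkm : k < m)
    {π π' : Equiv.Perm (Fin m)} (ε : Fin m → Bool)
    (h : ∀ i, (π'.symm i : ℕ) < k ↔ (π.symm i : ℕ) < k - 1 ∨ (π.symm i : ℕ) = k) :
    flagBarycenter π' ε ⟨k, hkm.trans m.lt_succ_self⟩ =
      flagBarycenter π ε ⟨k - 1, (k.sub_le 1).trans_lt (hkm.trans m.lt_succ_self)⟩ +
          flagBarycenter π ε ⟨k + 1, Nat.succ_lt_succ hkm⟩ -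
        flagBarycenter π ε ⟨k, hkm.trans m.lt_succ_self⟩ := by
  ext i
  have := h i
  simp only [flagBarycenter, Pi.add_apply, Pi.sub_apply]
  split_ifs <;> first | omega | norm_num

/-- Two adjacent flag simplices `σ = [v₀,…,v_m]`, `σ' = [v'₀,…,v'_m]` in a common plane with
`v_i = v'_i` for `i ≠ k`, `0 < k < m`, satisfy
`v'_k − v_m = −(v_k − v_m) + (v_{k−1} − v_m) + (v_{k+1} − v_m)`, and consequently
`(v'₀ − v'_m) ∧ ⋯ ∧ (v'_{m−1} − v'_m) = −(v₀ − v_m) ∧ ⋯ ∧ (v_{m−1} − v_m)`. -/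
theorem stmt9 (m k : ℕ) (hk0 : 0 < k) (hkm : k < m)
    (π π' : Equiv.Perm (Fin m)) (ε ε' : Fin m → Bool)
    (hagree : ∀ j : Fin (m + 1), (j : ℕ) ≠ k →
      flagBarycenter π ε j = flagBarycenter π' ε' j)
    (hne : flagBarycenter π ε ⟨k, by omega⟩ ≠ flagBarycenter π' ε' ⟨k, by omega⟩) :
    (flagBarycenter π' ε' ⟨k, by omega⟩ - flagBarycenter π ε (Fin.last m) =
      -(flagBarycenter π ε ⟨k, by omega⟩ - flagBarycenter π ε (Fin.last m)) +
        (flagBarycenter π ε ⟨k - 1, by omega⟩ - flagBarycenter π ε (Fin.last m)) +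
        (flagBarycenter π ε ⟨k + 1, by omega⟩ - flagBarycenter π ε (Fin.last m))) ∧
    ExteriorAlgebra.ιMulti ℝ m
        (fun i : Fin m =>
          flagBarycenter π' ε' i.castSucc - flagBarycenter π' ε' (Fin.last m)) =
      - ExteriorAlgebra.ιMulti ℝ m
        (fun i : Fin m =>
          flagBarycenter π ε i.castSucc - flagBarycenter π ε (Fin.last m)) := by
  have hfree (j : Fin (m + 1)) (hj : (j : ℕ) ≠ k) (i : Fin m) :=
    (flagBarycenter_eq_iff.1 (hagree j hj) i).1
  obtain rfl : ε = ε' :=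
    funext fun i => (flagBarycenter_eq_iff.1 (hagree 0 hk0.ne) i).2 (Nat.zero_le _)
  have hswap := lt_iff_lt_pred_or_eq_of_injective
    (Fin.val_injective.comp π.symm.injective) (Fin.val_injective.comp π'.symm.injective)
    (hfree ⟨k - 1, by omega⟩ (show k - 1 ≠ k by omega))
    (hfree ⟨k + 1, by omega⟩ (show k + 1 ≠ k by omega))
    (by
      by_contra! h
      exact hne (flagBarycenter_eq_iff.2 fun i => ⟨h i, fun _ => rfl⟩))
  have hmid := flagBarycenter_eq_pred_add_succ_sub hkm ε hswap
  have hlast : flagBarycenter π' ε (Fin.last m) = flagBarycenter π ε (Fin.last m) :=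
    (hagree (Fin.last m) hkm.ne').symm
  refine ⟨by rw [hmid]; abel, AlternatingMap.map_eq_neg_of_update_neg_add _ ⟨k, hkm⟩
    (x := (flagBarycenter π ε ⟨k - 1, by omega⟩ - flagBarycenter π ε (Fin.last m)) +
      (flagBarycenter π ε ⟨k + 1, by omega⟩ - flagBarycenter π ε (Fin.last m))) ?_ ?_ ?_⟩
  · exact Submodule.add_mem _ (sub_last_mem_span_image_compl _ (show k - 1 ≠ k by omega))
      (sub_last_mem_span_image_compl _ (show k + 1 ≠ k by omega))
  · intro i hi
    simp only [hlast, hagree i.castSucc (by simpa [Fin.ext_iff] using hi)]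
  · simp only [Fin.castSucc_mk, hlast, hmid]
    abel
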